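/- For real numbers α' < α and a function k : Γ₀ → ℝ with ‖k‖_{α'} := ess sup_η |k(η)|·exp(−α'|η|) < ∞, the multiplication operator (A₁ k)(η) = −(m|η| + E⁻(η))·k(η), where E⁻(η) = Σ_{x∈η}Σ_{y∈η\{x}} a⁻(x−y) with ‖a⁻‖_∞ < ∞, satisfies ‖A₁ k‖_α ≤ ‖k‖_{α'}·( m/(e(α−α')) + 4‖a⁻‖_∞/(e²(α−α')²) ). -/

import Mathlib

/-!
The operator multiplies `k η` by `m |η| + E⁻(η)`, and `0 ≤ E⁻(η) ≤ ‖a⁻‖_∞ |η|²`. Trading the weight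
`e^{-α|η|}` for `e^{-α'|η|} e^{-(α-α')|η|}`, it remains to bound `n e^{-σn}` and `n² e^{-σn}`
uniformly in `n`; both follow from `x ≤ e^{x-1}`.
-/

open Real Finset

theorem mul_exp_neg_mul_le {σ : ℝ} (hσ : 0 < σ) (t : ℝ) :
    t * exp (-(σ * t)) ≤ 1 / (exp 1 * σ) := by
  have h : σ * t ≤ exp (σ * t) / exp 1 := by
    simpa [exp_sub] using add_one_le_exp (σ * t - 1)
  rw [le_div_iff₀ (exp_pos 1)] at h
  rw [exp_neg, ← div_eq_mul_inv, div_le_div_iff₀ (exp_pos _) (by positivity)]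
  linarith

theorem sq_mul_exp_neg_mul_le {σ t : ℝ} (hσ : 0 < σ) (ht : 0 ≤ t) :
    t ^ 2 * exp (-(σ * t)) ≤ 4 / (exp 1 ^ 2 * σ ^ 2) := by
  have half : t * exp (-(σ / 2 * t)) ≤ 2 / (exp 1 * σ) := by
    convert mul_exp_neg_mul_le (half_pos hσ) t using 1
    field_simp
  calc t ^ 2 * exp (-(σ * t)) = (t * exp (-(σ / 2 * t))) ^ 2 := by
        rw [mul_pow, ← exp_nat_mul]; ring_nf
    _ ≤ (2 / (exp 1 * σ)) ^ 2 := by gcongr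
    _ = 4 / (exp 1 ^ 2 * σ ^ 2) := by ring

theorem sum_sum_erase_le_mul_card_sq {ι : Type*} [DecidableEq ι] {s : Finset ι}
    {f : ι → ι → ℝ} {C : ℝ} (hC : 0 ≤ C) (hf : ∀ x y, f x y ≤ C) :
    ∑ x ∈ s, ∑ y ∈ s.erase x, f x y ≤ C * (#s : ℝ) ^ 2 :=
  calc ∑ x ∈ s, ∑ y ∈ s.erase x, f x y ≤ ∑ x ∈ s, ∑ _y ∈ s, C :=
        sum_le_sum fun x _ ↦ (sum_le_sum fun y _ ↦ hf x y).trans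
          (sum_le_sum_of_subset_of_nonneg (erase_subset x s) fun _ _ _ ↦ hC)
    _ = C * (#s : ℝ) ^ 2 := by simp only [sum_const, nsmul_eq_mul]; ring

theorem add_mul_exp_neg_mul_le {σ m C n E : ℝ} (hσ : 0 < σ) (hm : 0 ≤ m) (hC : 0 ≤ C)
    (hn : 0 ≤ n) (hE : E ≤ C * n ^ 2) :
    (m * n + E) * exp (-(σ * n)) ≤ m / (exp 1 * σ) + 4 * C / (exp 1 ^ 2 * σ ^ 2) :=
  calc (m * n + E) * exp (-(σ * n))
      ≤ m * (n * exp (-(σ * n))) + C * (n ^ 2 * exp (-(σ * n))) := by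
        linarith [mul_le_mul_of_nonneg_right hE (exp_pos (-(σ * n))).le]
    _ ≤ m * (1 / (exp 1 * σ)) + C * (4 / (exp 1 ^ 2 * σ ^ 2)) := by
        gcongr
        exacts [mul_exp_neg_mul_le hσ n, sq_mul_exp_neg_mul_le hσ hn]
    _ = m / (exp 1 * σ) + 4 * C / (exp 1 ^ 2 * σ ^ 2) := by ring

theorem stmt6_general {d : ℕ} (aminus : EuclideanSpace ℝ (Fin d) → ℝ) (Ca m α α' K : ℝ)
    (hα : α' < α) (hm : 0 ≤ m) (ha : ∀ x, 0 ≤ aminus x ∧ aminus x ≤ Ca)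
    (k : Finset (EuclideanSpace ℝ (Fin d)) → ℝ)
    (hk : ∀ η : Finset (EuclideanSpace ℝ (Fin d)),
      |k η| * Real.exp (-(α' * η.card)) ≤ K) :
    ∀ η : Finset (EuclideanSpace ℝ (Fin d)),
      |(-(m * η.card + ∑ x ∈ η, ∑ y ∈ η.erase x, aminus (x - y))) * k η| *
          Real.exp (-(α * η.card)) ≤
        K * (m / (Real.exp 1 * (α - α')) +
          4 * Ca / (Real.exp 1 ^ 2 * (α - α') ^ 2)) := by
  intro η
  set E := ∑ x ∈ η, ∑ y ∈ η.erase x, aminus (x - y)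
  have hCa : 0 ≤ Ca := (ha 0).1.trans (ha 0).2
  have hE : 0 ≤ E := sum_nonneg fun x _ ↦ sum_nonneg fun y _ ↦ (ha (x - y)).1
  have hσ : 0 < α - α' := sub_pos.mpr hα
  have factor := add_mul_exp_neg_mul_le hσ hm hCa (Nat.cast_nonneg #η)
    (sum_sum_erase_le_mul_card_sq hCa fun x y ↦ (ha (x - y)).2)
  calc |(-(m * #η + E)) * k η| * exp (-(α * #η))
      = ((m * #η + E) * exp (-((α - α') * #η))) * (|k η| * exp (-(α' * #η))) := by
        rw [abs_mul, abs_neg, abs_of_nonneg (by positivity), mul_mul_mul_comm, ← exp_add]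
        ring_nf
    _ ≤ (m / (exp 1 * (α - α')) + 4 * Ca / (exp 1 ^ 2 * (α - α') ^ 2)) * K :=
        mul_le_mul factor (hk η) (by positivity) (by positivity)
    _ = _ := mul_comm _ _

/-- Norm bound for the multiplication operator `A₁`: if `‖k‖_{α'} ≤ K` in the
weighted sup-norm, then `‖A₁ k‖_α ≤ K·(m/(e(α−α')) + 4‖a⁻‖_∞/(e²(α−α')²))`,
stated pointwise for the weighted values. -/
theorem stmt6 {d : ℕ} (aminus : EuclideanSpace ℝ (Fin d) → ℝ) (Ca m α α' K : ℝ)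
    (hα : α' < α) (hm : 0 ≤ m) (ha : ∀ x, 0 ≤ aminus x ∧ aminus x ≤ Ca)
    (k : Finset (EuclideanSpace ℝ (Fin d)) → ℝ) (hK : 0 ≤ K)
    (hk : ∀ η : Finset (EuclideanSpace ℝ (Fin d)),
      |k η| * Real.exp (-(α' * η.card)) ≤ K) :
    ∀ η : Finset (EuclideanSpace ℝ (Fin d)),
      |(-(m * η.card + ∑ x ∈ η, ∑ y ∈ η.erase x, aminus (x - y))) * k η| *
          Real.exp (-(α * η.card)) ≤
        K * (m / (Real.exp 1 * (α - α')) +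
          4 * Ca / (Real.exp 1 ^ 2 * (α - α') ^ 2)) :=
  stmt6_general aminus Ca m α α' K hα hm ha k hk
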